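/- Under the final semantics, iteration of the truth predicate collapses: T(⌜T(⌜φ⌝)⌝) ↔ T(⌜φ⌝) and F(⌜T(⌜φ⌝)⌝) ↔ F(⌜φ⌝) are true for every sentence φ. -/

import Mathlib

/-- Three truth values of Strong Kleene semantics: true, false, undetermined. -/
inductive K3 : Type
  | t : K3
  | f : K3
  | u : K3
deriving DecidableEq

/-- Strong Kleene negation. -/
def kneg : K3 → K3
  | .t => .f
  | .f => .t
  | .u => .u

/-- Strong Kleene conjunction. -/
def kand : K3 → K3 → K3
  | .t, x => x
  | .f, _ => .f
  | .u, .t => .u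
  | .u, .f => .f
  | .u, .u => .u

/-- Strong Kleene disjunction. -/
def kor : K3 → K3 → K3
  | .t, _ => .t
  | .f, x => x
  | .u, .t => .t
  | .u, .f => .u
  | .u, .u => .u

/-- Strong Kleene conditional: ¬φ ∨ ψ. -/
def kimp (x y : K3) : K3 := kor (kneg x) y

/-- Strong Kleene biconditional. -/
def kiff : K3 → K3 → K3
  | .t, .t => .t
  | .f, .f => .t
  | .t, .f => .f
  | .f, .t => .f
  | _, _ => .u

/-- Information order on K3: `|` below everything, classical values incomparable. -/
def kle (x y : K3) : Prop := x = K3.u ∨ x = y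

/-- Sentences of a language with a truth predicate: atoms, truth attributions
`T⌜φ⌝`, and the classical connectives. -/
inductive Sent : Type
  | atom : Nat → Sent
  | tr : Sent → Sent
  | neg : Sent → Sent
  | conj : Sent → Sent → Sent
  | disj : Sent → Sent → Sent
  | impl : Sent → Sent → Sent
  | biimp : Sent → Sent → Sent

/-- `Ip` satisfies the Strong Kleene conditions on compound sentences. -/
def SKConditions (Ip : Sent → K3) : Prop :=
  (∀ φ, Ip (Sent.neg φ) = kneg (Ip φ)) ∧
  (∀ φ ψ, Ip (Sent.conj φ ψ) = kand (Ip φ) (Ip ψ)) ∧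
  (∀ φ ψ, Ip (Sent.disj φ ψ) = kor (Ip φ) (Ip ψ)) ∧
  (∀ φ ψ, Ip (Sent.impl φ ψ) = kimp (Ip φ) (Ip ψ)) ∧
  (∀ φ ψ, Ip (Sent.biimp φ ψ) = kiff (Ip φ) (Ip ψ))

/-- `Ip` is a fixed point: truth attributions get the value of the attributed
sentence. -/
def FixedPoint (Ip : Sent → K3) : Prop :=
  SKConditions Ip ∧ ∀ φ, Ip (Sent.tr φ) = Ip φ

/-- `If'` satisfies the classical recursive conditions on compound sentences. -/
def ClassicalConditions (If' : Sent → Bool) : Prop :=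
  (∀ φ, If' (Sent.neg φ) = !(If' φ)) ∧
  (∀ φ ψ, If' (Sent.conj φ ψ) = (If' φ && If' ψ)) ∧
  (∀ φ ψ, If' (Sent.disj φ ψ) = (If' φ || If' ψ)) ∧
  (∀ φ ψ, If' (Sent.impl φ ψ) = (!(If' φ) || If' ψ)) ∧
  (∀ φ ψ, If' (Sent.biimp φ ψ) = (If' φ == If' ψ))

/-- The final semantics condition on the truth predicate: `T⌜φ⌝` is true
exactly when `φ` is true in the primary semantics. -/
def FinalTruth (Ip : Sent → K3) (If' : Sent → Bool) : Prop :=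
  ∀ φ, If' (Sent.tr φ) = decide (Ip φ = K3.t)

theorem FixedPoint.neg_tr {Ip : Sent → K3} (hIp : FixedPoint Ip) (φ : Sent) :
    Ip (Sent.neg (Sent.tr φ)) = Ip (Sent.neg φ) := by
  rw [hIp.1.1, hIp.1.1, hIp.2]

theorem FinalTruth.tr_congr {Ip : Sent → K3} {If' : Sent → Bool} (hT : FinalTruth Ip If')
    {φ ψ : Sent} (h : Ip φ = Ip ψ) : If' (Sent.tr φ) = If' (Sent.tr ψ) := by
  rw [hT, hT, h]

theorem ClassicalConditions.biimp_of_eq {If' : Sent → Bool} (hIf : ClassicalConditions If')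
    {φ ψ : Sent} (h : If' φ = If' ψ) : If' (Sent.biimp φ ψ) = true := by
  rw [hIf.2.2.2.2, h, beq_self_eq_true]

/-- In the final semantics, iteration of the truth predicate collapses:
`T⌜T⌜φ⌝⌝ ↔ T⌜φ⌝` and `F⌜T⌜φ⌝⌝ ↔ F⌜φ⌝` are true, where `F⌜χ⌝ = T⌜¬χ⌝`. -/
theorem final_truth_iteration_collapses (Ip : Sent → K3) (If' : Sent → Bool)
    (hIp : FixedPoint Ip)
    (hIf : ClassicalConditions If')
    (hT : FinalTruth Ip If') :
    ∀ φ,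
      If' (Sent.biimp (Sent.tr (Sent.tr φ)) (Sent.tr φ)) = true ∧
      If' (Sent.biimp (Sent.tr (Sent.neg (Sent.tr φ)))
            (Sent.tr (Sent.neg φ))) = true := by
  intro φ
  exact ⟨hIf.biimp_of_eq (hT.tr_congr (hIp.2 φ)),
    hIf.biimp_of_eq (hT.tr_congr (hIp.neg_tr φ))⟩
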